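/- arXiv:1802.00106 — 2 statements merged into one kernel-verified Lean document; each statement's English description precedes it below -/
import Mathlib

section
/- On the EBCV space, [X₆, X₇] = −l(1+m(w²+x²)) X₁ − ml(wz+xy) X₂ + ml(wy−xz) X₃ − 2mz X₆ + 2my X₇. -/
noncomputable section

open Matrix

/-- Points of `ℝ⁷` with coordinates `(r,s,t,w,x,y,z) = (p 0, …, p 6)`. -/
abbrev E7 : Type := Fin 7 → ℝ

/-- Directional derivative of a function along a vector field. -/
def dirDeriv (A : E7 → E7) (f : E7 → ℝ) (p : E7) : ℝ := fderiv ℝ f p (A p)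

/-- Lie bracket of vector fields on `ℝ⁷`: `[A,B] = D_A B − D_B A`. -/
def vbracket (A B : E7 → E7) (p : E7) : E7 :=
  fderiv ℝ B p (A p) - fderiv ℝ A p (B p)

/-- The conformal factor `K = 1 + m(w² + x² + y² + z²)`. -/
def Kf (m : ℝ) (p : E7) : ℝ := 1 + m * ((p 3)^2 + (p 4)^2 + (p 5)^2 + (p 6)^2)

/-- The coframe `ω¹,…,ω⁷` of the extended BCV metric. -/
def omegaEBCV (m l : ℝ) : Fin 7 → E7 → E7 → ℝ :=
  ![fun p u => u 0 + l/(2 * Kf m p) * (p 3 * u 4 - p 4 * u 3 + p 5 * u 6 - p 6 * u 5),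
    fun p u => u 1 + l/(2 * Kf m p) * (p 3 * u 5 - p 5 * u 3 + p 6 * u 4 - p 4 * u 6),
    fun p u => u 2 + l/(2 * Kf m p) * (p 3 * u 6 - p 6 * u 3 + p 4 * u 5 - p 5 * u 4),
    fun p u => u 3 / Kf m p,
    fun p u => u 4 / Kf m p,
    fun p u => u 5 / Kf m p,
    fun p u => u 6 / Kf m p]

/-- The extended BCV metric `ds²_{m,l}` as a function of a point and two tangent vectors. -/
def gEBCV (m l : ℝ) (p : E7) (u v : E7) : ℝ :=
  (u 3 * v 3 + u 4 * v 4 + u 5 * v 5 + u 6 * v 6) / (Kf m p)^2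
  + (u 0 + l/(2 * Kf m p) * (p 3 * u 4 - p 4 * u 3 + p 5 * u 6 - p 6 * u 5))
    * (v 0 + l/(2 * Kf m p) * (p 3 * v 4 - p 4 * v 3 + p 5 * v 6 - p 6 * v 5))
  + (u 1 + l/(2 * Kf m p) * (p 3 * u 5 - p 5 * u 3 + p 6 * u 4 - p 4 * u 6))
    * (v 1 + l/(2 * Kf m p) * (p 3 * v 5 - p 5 * v 3 + p 6 * v 4 - p 4 * v 6))
  + (u 2 + l/(2 * Kf m p) * (p 3 * u 6 - p 6 * u 3 + p 4 * u 5 - p 5 * u 4))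
    * (v 2 + l/(2 * Kf m p) * (p 3 * v 6 - p 6 * v 3 + p 4 * v 5 - p 5 * v 4))

/-- The orthonormal frame `X₁,…,X₇` of the extended BCV space. -/
def XF (m l : ℝ) : Fin 7 → E7 → E7 :=
  ![fun _ => Pi.single 0 1,
    fun _ => Pi.single 1 1,
    fun _ => Pi.single 2 1,
    fun p => ![l * p 4 / 2, l * p 5 / 2, l * p 6 / 2, Kf m p, 0, 0, 0],
    fun p => ![-(l * p 3 / 2), -(l * p 6 / 2), l * p 5 / 2, 0, Kf m p, 0, 0],
    fun p => ![l * p 6 / 2, -(l * p 3 / 2), -(l * p 4 / 2), 0, 0, Kf m p, 0],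
    fun p => ![-(l * p 5 / 2), l * p 4 / 2, -(l * p 3 / 2), 0, 0, 0, Kf m p]]

/-! `X₆` and `X₇` are the linear vector fields `linX6`, `linX7`, tangent to the
`(r,s,t)`-directions, plus `K ∂_y` resp. `K ∂_z`. Their derivatives are therefore explicit, and
`[X₆, X₇] = DX₇ X₆ − DX₆ X₇` reduces to a polynomial identity in each coordinate. -/

open ContinuousLinearMap

def dKf (m : ℝ) (p : E7) : E7 →L[ℝ] ℝ :=
  (2 * m) • (p 3 • proj 3 + p 4 • proj 4 + p 5 • proj 5 + p 6 • proj 6)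

theorem hasFDerivAt_Kf (m : ℝ) (p : E7) : HasFDerivAt (Kf m) (dKf m p) p := by
  have hsq (j : Fin 7) := (hasFDerivAt_apply (𝕜 := ℝ) j p).pow 2
  have hK := ((((hsq 3).add (hsq 4)).add (hsq 5)).add (hsq 6)).const_mul m |>.const_add 1
  refine hK.congr_fderiv ?_
  ext v
  simp only [dKf, nsmul_eq_mul, _root_.add_apply, _root_.smul_apply, proj_apply, smul_eq_mul]
  ring

def linX6 (l : ℝ) : E7 →L[ℝ] E7 :=
  pi ![(l / 2) • proj 6, (-(l / 2)) • proj 3, (-(l / 2)) • proj 4, 0, 0, 0, 0]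

def linX7 (l : ℝ) : E7 →L[ℝ] E7 :=
  pi ![(-(l / 2)) • proj 5, (l / 2) • proj 4, (-(l / 2)) • proj 3, 0, 0, 0, 0]

theorem XF_five_eq (m l : ℝ) : XF m l 5 = fun q => linX6 l q + Kf m q • Pi.single 5 1 := by
  funext q i
  fin_cases i <;> simp [XF, linX6, div_mul_eq_mul_div]

theorem XF_six_eq (m l : ℝ) : XF m l 6 = fun q => linX7 l q + Kf m q • Pi.single 6 1 := by
  funext q i
  fin_cases i <;> simp [XF, linX7, div_mul_eq_mul_div]

theorem hasFDerivAt_XF_five (m l : ℝ) (p : E7) :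
    HasFDerivAt (XF m l 5) (linX6 l + (dKf m p).smulRight (Pi.single 5 1)) p := by
  rw [XF_five_eq]
  exact (linX6 l).hasFDerivAt.add ((hasFDerivAt_Kf m p).smul_const _)

theorem hasFDerivAt_XF_six (m l : ℝ) (p : E7) :
    HasFDerivAt (XF m l 6) (linX7 l + (dKf m p).smulRight (Pi.single 6 1)) p := by
  rw [XF_six_eq]
  exact (linX7 l).hasFDerivAt.add ((hasFDerivAt_Kf m p).smul_const _)

theorem vbracket_eq_of_hasFDerivAt {A B : E7 → E7} {A' B' : E7 →L[ℝ] E7} {p : E7}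
    (hA : HasFDerivAt A A' p) (hB : HasFDerivAt B B' p) :
    vbracket A B p = B' (A p) - A' (B p) := by
  rw [vbracket, hA.fderiv, hB.fderiv]

theorem ebcv_bracket_X6_X7 (m l : ℝ) (p : E7) :
    vbracket (XF m l 5) (XF m l 6) p =
      (-(l * (1 + m * ((p 3)^2 + (p 4)^2)))) • XF m l 0 p
      + (-(m * l * (p 3 * p 6 + p 4 * p 5))) • XF m l 1 p
      + (m * l * (p 3 * p 5 - p 4 * p 6)) • XF m l 2 p
      + (-(2 * m * p 6)) • XF m l 5 p
      + (2 * m * p 5) • XF m l 6 p := by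
  rw [vbracket_eq_of_hasFDerivAt (hasFDerivAt_XF_five m l p) (hasFDerivAt_XF_six m l p)]
  ext i
  fin_cases i <;>
  · simp only [XF, linX6, linX7, Kf, dKf, coe_pi', _root_.add_apply, _root_.smul_apply,
      _root_.zero_apply, smulRight_apply, proj_apply, Pi.add_apply, Pi.sub_apply, Pi.smul_apply,
      Pi.single_apply, smul_eq_mul, Fin.zero_eta, Fin.mk_one, Fin.reduceFinMk, cons_val_zero,
      cons_val_one, cons_val, Fin.isValue, Fin.reduceEq, reduceIte]
    ring
end
end

section
/- When m = 0, the Levi-Civita connection of the EBCV metric on ℝ⁷ satisfies ∇_{X₄}X₅ = −(l/2) X₁, ∇_{X₅}X₄ = (l/2) X₁, ∇_{X₄}X₄ = 0, ∇_{X₁}X₄ = (l/2) X₅, and ∇_{X₁}X₅ = −(l/2) X₄. -/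
noncomputable section

open Matrix

/-- The Koszul expression `2⟨∇_A B, C⟩`. -/
def koszul (m l : ℝ) (A B C : E7 → E7) (p : E7) : ℝ :=
  dirDeriv A (fun q => gEBCV m l q (B q) (C q)) p
  + dirDeriv B (fun q => gEBCV m l q (A q) (C q)) p
  - dirDeriv C (fun q => gEBCV m l q (A q) (B q)) p
  + gEBCV m l p (vbracket A B p) (C p)
  - gEBCV m l p (vbracket A C p) (B p)
  - gEBCV m l p (vbracket B C p) (A p)

/-- The matrix of the metric in the coordinate frame. -/
def Gmat (m l : ℝ) (p : E7) : Matrix (Fin 7) (Fin 7) ℝ :=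
  Matrix.of fun i j => gEBCV m l p (Pi.single i 1) (Pi.single j 1)

/-- The Levi-Civita connection `∇_A B`, defined from the Koszul formula. -/
def cov (m l : ℝ) (A B : E7 → E7) (p : E7) : E7 :=
  (Gmat m l p)⁻¹ *ᵥ fun i => (1/2) * koszul m l A B (fun _ => Pi.single i 1) p

/-- The (0,4) Riemann curvature tensor, with the sign convention making
`Riem4 A B A B` the (unnormalised) sectional curvature of `span{A,B}`. -/
def Riem4 (m l : ℝ) (A B C D : E7 → E7) (p : E7) : ℝ :=
  gEBCV m l p
    (cov m l A (cov m l B D) p - cov m l B (cov m l A D) p - cov m l (vbracket A B) D p)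
    (C p)

/-- The Ricci tensor, computed via the orthonormal frame `X₁,…,X₇`. -/
def RicEBCV (m l : ℝ) (A B : E7 → E7) (p : E7) : ℝ :=
  ∑ i : Fin 7, Riem4 m l (XF m l i) A (XF m l i) B p

/-- The scalar curvature. -/
def scalarEBCV (m l : ℝ) (p : E7) : ℝ :=
  ∑ i : Fin 7, RicEBCV m l (XF m l i) (XF m l i) p

section vec7
variable {α : Type*} (a b c d e f g : α)
@[simp] lemma vec7_0 : ![a,b,c,d,e,f,g] (0 : Fin 7) = a := rfl
@[simp] lemma vec7_1 : ![a,b,c,d,e,f,g] (1 : Fin 7) = b := rfl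
@[simp] lemma vec7_2 : ![a,b,c,d,e,f,g] (2 : Fin 7) = c := rfl
@[simp] lemma vec7_3 : ![a,b,c,d,e,f,g] (3 : Fin 7) = d := rfl
@[simp] lemma vec7_4 : ![a,b,c,d,e,f,g] (4 : Fin 7) = e := rfl
@[simp] lemma vec7_5 : ![a,b,c,d,e,f,g] (5 : Fin 7) = f := rfl
@[simp] lemma vec7_6 : ![a,b,c,d,e,f,g] (6 : Fin 7) = g := rfl
@[simp] lemma vec7_0' (h : (0:ℕ) < 7) : ![a,b,c,d,e,f,g] ⟨0,h⟩ = a := rfl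
@[simp] lemma vec7_1' (h : (1:ℕ) < 7) : ![a,b,c,d,e,f,g] ⟨1,h⟩ = b := rfl
@[simp] lemma vec7_2' (h : (2:ℕ) < 7) : ![a,b,c,d,e,f,g] ⟨2,h⟩ = c := rfl
@[simp] lemma vec7_3' (h : (3:ℕ) < 7) : ![a,b,c,d,e,f,g] ⟨3,h⟩ = d := rfl
@[simp] lemma vec7_4' (h : (4:ℕ) < 7) : ![a,b,c,d,e,f,g] ⟨4,h⟩ = e := rfl
@[simp] lemma vec7_5' (h : (5:ℕ) < 7) : ![a,b,c,d,e,f,g] ⟨5,h⟩ = f := rfl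
@[simp] lemma vec7_6' (h : (6:ℕ) < 7) : ![a,b,c,d,e,f,g] ⟨6,h⟩ = g := rfl
end vec7

lemma g3const (l : ℝ) (p v : E7) : gEBCV 0 l p (XF 0 l 3 p) v = v 3 := by
  simp [gEBCV, XF, Kf]; ring

lemma g4const (l : ℝ) (p v : E7) : gEBCV 0 l p (XF 0 l 4 p) v = v 4 := by
  simp [gEBCV, XF, Kf]; ring

lemma g0aff (l : ℝ) (p v : E7) : gEBCV 0 l p (Pi.single 0 1) v
    = v 0 + (l/2 * v 4) * p 3 + (-(l/2) * v 3) * p 4 + (l/2 * v 6) * p 5 + (-(l/2) * v 5) * p 6 := by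
  simp [gEBCV, Kf, Pi.single_apply]; ring

lemma dirlin (A : E7 → E7) (c a3 a4 a5 a6 : ℝ) (p : E7) :
    dirDeriv A (fun q : E7 => c + a3 * q 3 + a4 * q 4 + a5 * q 5 + a6 * q 6) p
    = a3 * A p 3 + a4 * A p 4 + a5 * A p 5 + a6 * A p 6 := by
  have h3 : HasFDerivAt (𝕜 := ℝ) (fun q : E7 => q 3) (ContinuousLinearMap.proj 3) p :=
    hasFDerivAt_apply 3 p
  have h4 : HasFDerivAt (𝕜 := ℝ) (fun q : E7 => q 4) (ContinuousLinearMap.proj 4) p :=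
    hasFDerivAt_apply 4 p
  have h5 : HasFDerivAt (𝕜 := ℝ) (fun q : E7 => q 5) (ContinuousLinearMap.proj 5) p :=
    hasFDerivAt_apply 5 p
  have h6 : HasFDerivAt (𝕜 := ℝ) (fun q : E7 => q 6) (ContinuousLinearMap.proj 6) p :=
    hasFDerivAt_apply 6 p
  have h : HasFDerivAt (fun q : E7 => c + a3 * q 3 + a4 * q 4 + a5 * q 5 + a6 * q 6)
      ((((a3 • ContinuousLinearMap.proj 3 + a4 • ContinuousLinearMap.proj 4)
        + a5 • ContinuousLinearMap.proj 5) + a6 • ContinuousLinearMap.proj 6 :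
        E7 →L[ℝ] ℝ)) p := by
    exact ((((h3.const_mul a3).const_add c).add (h4.const_mul a4)).add (h5.const_mul a5)).add
      (h6.const_mul a6)
  unfold dirDeriv
  rw [h.fderiv]
  simp [ContinuousLinearMap.proj]

lemma dd_const (A : E7 → E7) (f : E7 → ℝ) (c : ℝ) (hf : ∀ q, f q = c) (p : E7) :
    dirDeriv A f p = 0 := by
  unfold dirDeriv
  rw [show f = fun _ => c from funext hf]
  simp

lemma dd_aff (A : E7 → E7) (f : E7 → ℝ) (c a3 a4 a5 a6 : ℝ)
    (hf : ∀ q, f q = c + a3 * q 3 + a4 * q 4 + a5 * q 5 + a6 * q 6) (p : E7) :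
    dirDeriv A f p = a3 * A p 3 + a4 * A p 4 + a5 * A p 5 + a6 * A p 6 := by
  rw [show f = fun q : E7 => c + a3 * q 3 + a4 * q 4 + a5 * q 5 + a6 * q 6 from funext hf]
  exact dirlin A c a3 a4 a5 a6 p

def L3 (l : ℝ) : E7 →L[ℝ] E7 :=
  ContinuousLinearMap.pi ![(l/2) • ContinuousLinearMap.proj 4, (l/2) • ContinuousLinearMap.proj 5,
    (l/2) • ContinuousLinearMap.proj 6, 0, 0, 0, 0]

def L4 (l : ℝ) : E7 →L[ℝ] E7 :=
  ContinuousLinearMap.pi ![(-(l/2)) • ContinuousLinearMap.proj 3,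
    (-(l/2)) • ContinuousLinearMap.proj 6, (l/2) • ContinuousLinearMap.proj 5, 0, 0, 0, 0]

@[simp] lemma L3_apply (l : ℝ) (v : E7) (k : Fin 7) :
    L3 l v k = ![l/2 * v 4, l/2 * v 5, l/2 * v 6, 0, 0, 0, 0] k := by
  fin_cases k <;> simp [L3, ContinuousLinearMap.proj] <;> ring

@[simp] lemma L4_apply (l : ℝ) (v : E7) (k : Fin 7) :
    L4 l v k = ![-(l/2) * v 3, -(l/2) * v 6, l/2 * v 5, 0, 0, 0, 0] k := by
  fin_cases k <;> simp [L4, ContinuousLinearMap.proj] <;> ring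

lemma fderivX3 (l : ℝ) (p : E7) : fderiv ℝ (XF 0 l 3) p = L3 l := by
  have hX : XF 0 l 3 = fun q => (![0,0,0,1,0,0,0] : E7) + L3 l q := by
    funext q k
    fin_cases k <;> simp [XF, Kf] <;> ring
  rw [hX]
  exact (((L3 l).hasFDerivAt (x := p)).const_add _).fderiv

lemma fderivX4 (l : ℝ) (p : E7) : fderiv ℝ (XF 0 l 4) p = L4 l := by
  have hX : XF 0 l 4 = fun q => (![0,0,0,0,1,0,0] : E7) + L4 l q := by
    funext q k
    fin_cases k <;> simp [XF, Kf] <;> ring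
  rw [hX]
  exact (((L4 l).hasFDerivAt (x := p)).const_add _).fderiv

lemma fderivX0 (l : ℝ) (p : E7) : fderiv ℝ (XF 0 l 0) p = 0 := by
  have hX : XF 0 l 0 = fun _ => Pi.single (0 : Fin 7) (1:ℝ) := rfl
  rw [hX]; simp



lemma kvec34 (l : ℝ) (p : E7) :
    (fun i => (1/2 : ℝ) * koszul 0 l (XF 0 l 3) (XF 0 l 4) (fun _ => Pi.single i 1) p)
    = ![-(l/2), 0, 0, l^2/4 * p 4, -(l^2/4 * p 3), l^2/4 * p 6, -(l^2/4 * p 5)] := by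
  funext i
  simp only [koszul, vbracket]
  rw [dd_const (XF 0 l 3) (fun q => gEBCV 0 l q (XF 0 l 4 q) (Pi.single i 1))
        ((Pi.single i 1 : E7) 4) (fun q => by exact g4const l q _) p,
      dd_const (XF 0 l 4) (fun q => gEBCV 0 l q (XF 0 l 3 q) (Pi.single i 1))
        ((Pi.single i 1 : E7) 3) (fun q => by exact g3const l q _) p,
      dd_const (fun _ => Pi.single i 1) (fun q => gEBCV 0 l q (XF 0 l 3 q) (XF 0 l 4 q))
        0 (fun q => by exact (g3const l q _).trans (by simp [XF])) p,
      fderivX3, fderivX4]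
  simp [gEBCV, Kf, XF]
  fin_cases i <;> simp [Pi.single_apply, -mul_eq_zero] <;> ring

lemma kvec43 (l : ℝ) (p : E7) :
    (fun i => (1/2 : ℝ) * koszul 0 l (XF 0 l 4) (XF 0 l 3) (fun _ => Pi.single i 1) p)
    = ![l/2, 0, 0, -(l^2/4 * p 4), l^2/4 * p 3, -(l^2/4 * p 6), l^2/4 * p 5] := by
  funext i
  simp only [koszul, vbracket]
  rw [dd_const (XF 0 l 4) (fun q => gEBCV 0 l q (XF 0 l 3 q) (Pi.single i 1))
        ((Pi.single i 1 : E7) 3) (fun q => by exact g3const l q _) p,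
      dd_const (XF 0 l 3) (fun q => gEBCV 0 l q (XF 0 l 4 q) (Pi.single i 1))
        ((Pi.single i 1 : E7) 4) (fun q => by exact g4const l q _) p,
      dd_const (fun _ => Pi.single i 1) (fun q => gEBCV 0 l q (XF 0 l 4 q) (XF 0 l 3 q))
        0 (fun q => by exact (g4const l q _).trans (by simp [XF])) p,
      fderivX3, fderivX4]
  simp [gEBCV, Kf, XF]
  fin_cases i <;> simp [Pi.single_apply, -mul_eq_zero] <;> ring

lemma kvec33 (l : ℝ) (p : E7) :
    (fun i => (1/2 : ℝ) * koszul 0 l (XF 0 l 3) (XF 0 l 3) (fun _ => Pi.single i 1) p)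
    = ![0, 0, 0, 0, 0, 0, 0] := by
  funext i
  simp only [koszul, vbracket]
  rw [dd_const (XF 0 l 3) (fun q => gEBCV 0 l q (XF 0 l 3 q) (Pi.single i 1))
        ((Pi.single i 1 : E7) 3) (fun q => by exact g3const l q _) p,
      dd_const (fun _ => Pi.single i 1) (fun q => gEBCV 0 l q (XF 0 l 3 q) (XF 0 l 3 q))
        1 (fun q => by exact (g3const l q _).trans (by simp [XF, Kf])) p,
      fderivX3]
  simp [gEBCV, Kf, XF]
  fin_cases i <;> simp [Pi.single_apply, -mul_eq_zero] <;> ring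

lemma kvec03 (l : ℝ) (p : E7) :
    (fun i => (1/2 : ℝ) * koszul 0 l (XF 0 l 0) (XF 0 l 3) (fun _ => Pi.single i 1) p)
    = ![0, 0, 0, 0, l/2, 0, 0] := by
  funext i
  simp only [koszul, vbracket]
  rw [dd_const (XF 0 l 0) (fun q => gEBCV 0 l q (XF 0 l 3 q) (Pi.single i 1))
        ((Pi.single i 1 : E7) 3) (fun q => by exact g3const l q _) p,
      dd_aff (XF 0 l 3) (fun q => gEBCV 0 l q (XF 0 l 0 q) (Pi.single i 1))
        ((Pi.single i 1 : E7) 0) (l/2 * (Pi.single i 1 : E7) 4) (-(l/2) * (Pi.single i 1 : E7) 3)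
        (l/2 * (Pi.single i 1 : E7) 6) (-(l/2) * (Pi.single i 1 : E7) 5)
        (fun q => by exact g0aff l q _) p,
      dd_const (fun _ => Pi.single i 1) (fun q => gEBCV 0 l q (XF 0 l 0 q) (XF 0 l 3 q))
        0 (fun q => by exact (g0aff l q _).trans (by simp [XF, Kf]; ring)) p,
      fderivX0, fderivX3]
  simp only [fderiv_const, Pi.zero_apply, ContinuousLinearMap.zero_apply]
  simp [gEBCV, Kf, XF]
  fin_cases i <;> simp [Pi.single_apply, -mul_eq_zero] <;> ring

lemma kvec04 (l : ℝ) (p : E7) :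
    (fun i => (1/2 : ℝ) * koszul 0 l (XF 0 l 0) (XF 0 l 4) (fun _ => Pi.single i 1) p)
    = ![0, 0, 0, -(l/2), 0, 0, 0] := by
  funext i
  simp only [koszul, vbracket]
  rw [dd_const (XF 0 l 0) (fun q => gEBCV 0 l q (XF 0 l 4 q) (Pi.single i 1))
        ((Pi.single i 1 : E7) 4) (fun q => by exact g4const l q _) p,
      dd_aff (XF 0 l 4) (fun q => gEBCV 0 l q (XF 0 l 0 q) (Pi.single i 1))
        ((Pi.single i 1 : E7) 0) (l/2 * (Pi.single i 1 : E7) 4) (-(l/2) * (Pi.single i 1 : E7) 3)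
        (l/2 * (Pi.single i 1 : E7) 6) (-(l/2) * (Pi.single i 1 : E7) 5)
        (fun q => by exact g0aff l q _) p,
      dd_const (fun _ => Pi.single i 1) (fun q => gEBCV 0 l q (XF 0 l 0 q) (XF 0 l 4 q))
        0 (fun q => by exact (g0aff l q _).trans (by simp [XF, Kf]; ring)) p,
      fderivX0, fderivX4]
  simp only [fderiv_const, Pi.zero_apply, ContinuousLinearMap.zero_apply]
  simp [gEBCV, Kf, XF]
  fin_cases i <;> simp [Pi.single_apply, -mul_eq_zero] <;> ring



def Hm (l : ℝ) (p : E7) : Matrix (Fin 7) (Fin 7) ℝ :=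
  Matrix.of
    ![![1 + l^2/4 * ((p 3)^2 + (p 4)^2 + (p 5)^2 + (p 6)^2), 0, 0,
        l * p 4 / 2, -(l * p 3 / 2), l * p 6 / 2, -(l * p 5 / 2)],
      ![0, 1 + l^2/4 * ((p 3)^2 + (p 4)^2 + (p 5)^2 + (p 6)^2), 0,
        l * p 5 / 2, -(l * p 6 / 2), -(l * p 3 / 2), l * p 4 / 2],
      ![0, 0, 1 + l^2/4 * ((p 3)^2 + (p 4)^2 + (p 5)^2 + (p 6)^2),
        l * p 6 / 2, l * p 5 / 2, -(l * p 4 / 2), -(l * p 3 / 2)],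
      ![l * p 4 / 2, l * p 5 / 2, l * p 6 / 2, 1, 0, 0, 0],
      ![-(l * p 3 / 2), -(l * p 6 / 2), l * p 5 / 2, 0, 1, 0, 0],
      ![l * p 6 / 2, -(l * p 3 / 2), -(l * p 4 / 2), 0, 0, 1, 0],
      ![-(l * p 5 / 2), l * p 4 / 2, -(l * p 3 / 2), 0, 0, 0, 1]]

lemma fin7cases {P : Fin 7 → Prop} (h0 : P 0) (h1 : P 1) (h2 : P 2) (h3 : P 3)
    (h4 : P 4) (h5 : P 5) (h6 : P 6) : ∀ i, P i := by
  intro i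
  fin_cases i
  exacts [h0, h1, h2, h3, h4, h5, h6]

set_option maxHeartbeats 1000000 in
lemma Gmat_eq (l : ℝ) (p : E7) : Gmat 0 l p = Matrix.of
    ![![1, 0, 0, -(l/2 * p 4), l/2 * p 3, -(l/2 * p 6), l/2 * p 5],
      ![0, 1, 0, -(l/2 * p 5), l/2 * p 6, l/2 * p 3, -(l/2 * p 4)],
      ![0, 0, 1, -(l/2 * p 6), -(l/2 * p 5), l/2 * p 4, l/2 * p 3],
      ![-(l/2 * p 4), -(l/2 * p 5), -(l/2 * p 6),
        1 + l^2/4 * ((p 4)^2 + (p 5)^2 + (p 6)^2), -(l^2/4 * p 3 * p 4),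
        -(l^2/4 * p 3 * p 5), -(l^2/4 * p 3 * p 6)],
      ![l/2 * p 3, l/2 * p 6, -(l/2 * p 5), -(l^2/4 * p 3 * p 4),
        1 + l^2/4 * ((p 3)^2 + (p 5)^2 + (p 6)^2), -(l^2/4 * p 4 * p 5),
        -(l^2/4 * p 4 * p 6)],
      ![-(l/2 * p 6), l/2 * p 3, l/2 * p 4, -(l^2/4 * p 3 * p 5),
        -(l^2/4 * p 4 * p 5), 1 + l^2/4 * ((p 3)^2 + (p 4)^2 + (p 6)^2),
        -(l^2/4 * p 5 * p 6)],
      ![l/2 * p 5, -(l/2 * p 4), l/2 * p 3, -(l^2/4 * p 3 * p 6),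
        -(l^2/4 * p 4 * p 6), -(l^2/4 * p 5 * p 6),
        1 + l^2/4 * ((p 3)^2 + (p 4)^2 + (p 5)^2)]] := by
  apply Matrix.ext
  apply fin7cases <;> apply fin7cases <;>
    simp only [Matrix.of_apply, vec7_0, vec7_1, vec7_2, vec7_3, vec7_4, vec7_5, vec7_6] <;>
    simp [Gmat, gEBCV, Kf, Pi.single_apply, -mul_eq_zero] <;> ring

set_option maxHeartbeats 1000000 in
lemma GH (l : ℝ) (p : E7) : Gmat 0 l p * Hm l p = 1 := by
  rw [Gmat_eq]
  apply Matrix.ext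
  apply fin7cases <;> apply fin7cases <;>
    simp only [Hm, Matrix.mul_apply, Fin.sum_univ_seven, Matrix.of_apply, vec7_0, vec7_1,
      vec7_2, vec7_3, vec7_4, vec7_5, vec7_6, Matrix.one_apply] <;>
    simp [-mul_eq_zero] <;> ring

lemma Ginv (l : ℝ) (p : E7) : (Gmat 0 l p)⁻¹ = Hm l p :=
  Matrix.inv_eq_right_inv (GH l p)

theorem ebcv_m_zero_levi_civita (l : ℝ) (p : E7) :
    cov 0 l (XF 0 l 3) (XF 0 l 4) p = (-(l/2)) • XF 0 l 0 p ∧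
    cov 0 l (XF 0 l 4) (XF 0 l 3) p = (l/2) • XF 0 l 0 p ∧
    cov 0 l (XF 0 l 3) (XF 0 l 3) p = 0 ∧
    cov 0 l (XF 0 l 0) (XF 0 l 3) p = (l/2) • XF 0 l 4 p ∧
    cov 0 l (XF 0 l 0) (XF 0 l 4) p = (-(l/2)) • XF 0 l 3 p := by
  refine ⟨?_, ?_, ?_, ?_, ?_⟩ <;>
    [(unfold cov; rw [Ginv, kvec34]); (unfold cov; rw [Ginv, kvec43]);
     (unfold cov; rw [Ginv, kvec33]); (unfold cov; rw [Ginv, kvec03]);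
     (unfold cov; rw [Ginv, kvec04])] <;>
  (apply funext; apply fin7cases) <;>
    simp only [Matrix.mulVec, dotProduct, Fin.sum_univ_seven, Hm, Matrix.of_apply,
      vec7_0, vec7_1, vec7_2, vec7_3, vec7_4, vec7_5, vec7_6, XF, Pi.smul_apply,
      Pi.zero_apply, smul_eq_mul] <;>
    simp [Pi.single_apply, Kf, -mul_eq_zero] <;> ring
end
end
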